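/- arXiv:0802.1831 — 3 statements merged into one kernel-verified Lean document; each statement's English description precedes it below -/
import Mathlib

section
/- Let G_t be a Gamma process (G_t ~ Gamma(t,1)) and L_k^{(α)} the generalized Laguerre polynomials. Then for 0 < s < t, E[L_k^{(t-1)}(G_t) | G_s] = L_k^{(s-1)}(G_s). -/
open MeasureTheory

/-- The generalized Laguerre polynomial
`L_k^{(α)}(x) = ∑_{i=0}^k (-1)^i binom(k+α, k-i) x^i / i!`. -/
noncomputable def laguerre (k : ℕ) (α x : ℝ) : ℝ :=
  ∑ i ∈ Finset.range (k + 1),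
    (-1) ^ i * ((∏ j ∈ Finset.range (k - i), (α + i + 1 + j)) / ((k - i).factorial : ℝ))
      * x ^ i / (i.factorial : ℝ)

/-- The density of the Gamma(a,1) distribution (rate 1). -/
noncomputable def gammaDensity (a x : ℝ) : ℝ :=
  if 0 ≤ x then x ^ (a - 1) * Real.exp (-x) / Real.Gamma a else 0

/-- Rising factorial (Pochhammer) over the reals. -/
noncomputable def pochR (x : ℝ) (n : ℕ) : ℝ := ∏ j ∈ Finset.range n, (x + j)

lemma pochR_succ (x : ℝ) (n : ℕ) : pochR x (n + 1) = pochR x n * (x + n) := by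
  simp [pochR, Finset.prod_range_succ]

lemma pochR_succ' (x : ℝ) (n : ℕ) : pochR x (n + 1) = x * pochR (x + 1) n := by
  rw [pochR, Finset.prod_range_succ']
  simp only [Nat.cast_zero, add_zero, mul_comm, pochR]
  congr 1
  apply Finset.prod_congr rfl
  intro j _
  push_cast
  ring

lemma key (K : ℕ) : ∀ a b : ℝ,
    ∑ m ∈ Finset.range (K + 1), (-1 : ℝ) ^ m * (K.choose m : ℝ) * pochR a m
      * pochR (b + m) (K - m) = pochR (b - a) K := by
  induction K with
  | zero => intro a b; simp [pochR]
  | succ K ih =>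
    intro a b
    set f : ℕ → ℝ := fun m => (-1 : ℝ) ^ m * ((K+1).choose m : ℝ)
          * pochR a m * pochR (b + m) (K + 1 - m) with hf
    set F : ℕ → ℝ := fun m => (-1 : ℝ) ^ m * (K.choose m : ℝ)
          * pochR a m * pochR (b + m) (K + 1 - m) with hF
    set h : ℕ → ℝ := fun m => (-1 : ℝ) ^ (m+1) * (K.choose m : ℝ)
          * pochR a (m+1) * pochR (b + (m+1 : ℕ)) (K - m) with hh
    have split : ∑ m ∈ Finset.range (K + 2), f m
        = (∑ m ∈ Finset.range (K + 1), F m) + ∑ m ∈ Finset.range (K + 1), h m := by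
      rw [Finset.sum_range_succ' f (K+1), Finset.sum_range_succ' F K]
      have hFtop : ∑ m ∈ Finset.range K, F (m+1) = ∑ m ∈ Finset.range (K+1), F (m+1) := by
        rw [Finset.sum_range_succ]
        simp [hF, Nat.choose_succ_self]
      rw [hFtop]
      have hf0 : f 0 = F 0 := by simp [hf, hF]
      have main : ∑ m ∈ Finset.range (K+1), f (m+1)
          = ∑ m ∈ Finset.range (K+1), (F (m+1) + h m) := by
        apply Finset.sum_congr rfl
        intro m _
        simp only [hf, hF, hh]
        have hc : ((K+1).choose (m+1) : ℝ) = (K.choose m : ℝ) + (K.choose (m+1) : ℝ) := by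
          rw [Nat.choose_succ_succ]; push_cast; ring
        have hsub : K + 1 - (m + 1) = K - m := by omega
        rw [hc, hsub]
        ring
      rw [Finset.sum_add_distrib] at main
      rw [hf0, main]
      ring
    have hA : ∑ m ∈ Finset.range (K + 1), F m
        = (b + K) * ∑ m ∈ Finset.range (K + 1), (-1 : ℝ) ^ m * (K.choose m : ℝ)
            * pochR a m * pochR (b + m) (K - m) := by
      rw [Finset.mul_sum]
      apply Finset.sum_congr rfl
      intro m hm
      have hm' : m ≤ K := by simpa [Nat.lt_succ_iff] using hm
      have h1 : K + 1 - m = (K - m) + 1 := by omega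
      have h2 : pochR (b + m) (K - m + 1) = pochR (b + m) (K - m) * (b + K) := by
        rw [pochR_succ]
        congr 1
        rw [Nat.cast_sub hm']
        ring
      simp only [hF, h1, h2]
      ring
    have hB : ∑ m ∈ Finset.range (K + 1), h m
        = -a * ∑ m ∈ Finset.range (K + 1), (-1 : ℝ) ^ m * (K.choose m : ℝ)
            * pochR (a+1) m * pochR ((b+1) + m) (K - m) := by
      rw [Finset.mul_sum]
      apply Finset.sum_congr rfl
      intro m _
      simp only [hh]
      have h1 : pochR a (m+1) = a * pochR (a+1) m := pochR_succ' a m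
      have h2 : b + ((m+1 : ℕ) : ℝ) = (b+1) + (m : ℝ) := by push_cast; ring
      rw [h1, h2]
      ring
    rw [split, hA, hB, ih a b, ih (a+1) (b+1)]
    have : (b + 1) - (a + 1) = b - a := by ring
    rw [this, pochR_succ]
    ring

lemma Gamma_pochR (a : ℝ) (ha : 0 < a) (m : ℕ) :
    Real.Gamma (a + m) = pochR a m * Real.Gamma a := by
  induction m with
  | zero => simp [pochR]
  | succ m ih =>
    have h1 : a + ((m : ℝ) + 1) = (a + m) + 1 := by ring
    have h2 : a + (m : ℝ) ≠ 0 := by positivity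
    push_cast
    rw [h1, Real.Gamma_add_one h2, pochR_succ, ih]
    ring

lemma gd_indicator (a : ℝ) (m : ℕ) :
    (fun y : ℝ => gammaDensity a y * y ^ m)
      = Set.indicator (Set.Ici 0)
          (fun y => y ^ (a - 1) * Real.exp (-y) / Real.Gamma a * y ^ m) := by
  funext y
  rw [Set.indicator_apply, gammaDensity]
  by_cases h : (0 : ℝ) ≤ y <;> simp [h]

lemma eqOn_Ioi (a : ℝ) (m : ℕ) : ∀ y ∈ Set.Ioi (0 : ℝ),
    y ^ (a - 1) * Real.exp (-y) / Real.Gamma a * y ^ m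
      = Real.exp (-y) * y ^ (a + m - 1) / Real.Gamma a := by
  intro y hy
  have hy : (0 : ℝ) < y := hy
  have h1 : (y : ℝ) ^ m = y ^ (m : ℝ) := (Real.rpow_natCast y m).symm
  have h2 : y ^ (a - 1) * y ^ (m : ℝ) = y ^ (a + m - 1) := by
    rw [← Real.rpow_add hy]
    ring_nf
  field_simp
  rw [h1, h2]

lemma integrableOn_gd (a : ℝ) (ha : 0 < a) (m : ℕ) :
    IntegrableOn (fun y : ℝ => y ^ (a - 1) * Real.exp (-y) / Real.Gamma a * y ^ m)
      (Set.Ioi 0) := by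
  have h : IntegrableOn (fun y : ℝ => Real.exp (-y) * y ^ (a + m - 1) / Real.Gamma a)
      (Set.Ioi 0) := (Real.GammaIntegral_convergent (by positivity)).div_const _
  exact h.congr_fun (fun y hy => (eqOn_Ioi a m y hy).symm) measurableSet_Ioi

lemma integrable_gd_pow (a : ℝ) (ha : 0 < a) (m : ℕ) :
    Integrable (fun y : ℝ => gammaDensity a y * y ^ m) := by
  rw [gd_indicator]
  apply MeasureTheory.IntegrableOn.integrable_indicator _ measurableSet_Ici
  rw [integrableOn_Ici_iff_integrableOn_Ioi]
  exact integrableOn_gd a ha m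

lemma integral_gd_pow (a : ℝ) (ha : 0 < a) (m : ℕ) :
    ∫ y : ℝ, gammaDensity a y * y ^ m = pochR a m := by
  rw [gd_indicator, MeasureTheory.integral_indicator measurableSet_Ici,
    MeasureTheory.integral_Ici_eq_integral_Ioi,
    MeasureTheory.setIntegral_congr_fun measurableSet_Ioi (eqOn_Ioi a m)]
  rw [integral_div, ← Real.Gamma_eq_integral (show (0:ℝ) < a + m by positivity),
    Gamma_pochR a ha m]
  field_simp [(Real.Gamma_pos_of_pos ha).ne']

lemma sum_reindex (N : ℕ) (g : ℕ → ℕ → ℝ) :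
    ∑ i ∈ Finset.range (N + 1), ∑ m ∈ Finset.range (i + 1), g i m
      = ∑ n ∈ Finset.range (N + 1), ∑ m ∈ Finset.range (N - n + 1), g (n + m) m := by
  rw [Finset.sum_sigma', Finset.sum_sigma']
  apply Finset.sum_nbij' (i := fun p => ⟨p.1 - p.2, p.2⟩) (j := fun p => ⟨p.1 + p.2, p.2⟩)
  · intro p hp
    simp only [Finset.mem_sigma, Finset.mem_range] at hp ⊢
    omega
  · intro p hp
    simp only [Finset.mem_sigma, Finset.mem_range] at hp ⊢
    omega
  · intro p hp
    simp only [Finset.mem_sigma, Finset.mem_range] at hp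
    obtain ⟨p1, p2⟩ := p
    simp only at hp ⊢
    have : p1 - p2 + p2 = p1 := by omega
    rw [this]
  · intro p hp
    simp only [Finset.mem_sigma, Finset.mem_range] at hp
    obtain ⟨p1, p2⟩ := p
    simp only at hp ⊢
    have : p1 + p2 - p2 = p1 := by omega
    rw [this]
  · intro p hp
    simp only [Finset.mem_sigma, Finset.mem_range] at hp
    have : p.1 - p.2 + p.2 = p.1 := by omega
    simp only [this]

lemma innerSumLem (s t : ℝ) (k n : ℕ) (x : ℝ) :
    ∑ m ∈ Finset.range (k - n + 1),
      ((-1 : ℝ) ^ (n + m) * (pochR (t + ((n + m : ℕ) : ℝ)) (k - (n + m))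
          / (((k - (n + m)).factorial : ℝ)))
        * (x ^ ((n + m) - m) * (((n + m).choose m : ℝ))) / (((n + m).factorial : ℝ)))
        * pochR (t - s) m
      = (-1 : ℝ) ^ n * (pochR (s + n) (k - n) / (((k - n).factorial : ℝ)))
        * x ^ n / ((n.factorial : ℝ)) := by
  have hkey := key (k - n) (t - s) (t + n)
  have harg : (t + (n : ℝ)) - (t - s) = s + n := by ring
  rw [harg] at hkey
  have step : ∑ m ∈ Finset.range (k - n + 1),
      ((-1 : ℝ) ^ (n + m) * (pochR (t + ((n + m : ℕ) : ℝ)) (k - (n + m))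
          / (((k - (n + m)).factorial : ℝ)))
        * (x ^ ((n + m) - m) * (((n + m).choose m : ℝ))) / (((n + m).factorial : ℝ)))
        * pochR (t - s) m
      = ((-1 : ℝ) ^ n * x ^ n / ((n.factorial : ℝ) * ((k - n).factorial : ℝ)))
        * ∑ m ∈ Finset.range (k - n + 1), (-1 : ℝ) ^ m * ((k - n).choose m : ℝ)
            * pochR (t - s) m * pochR ((t + n) + m) (k - n - m) := by
    rw [Finset.mul_sum]
    apply Finset.sum_congr rfl
    intro m hm
    have hm' : m ≤ k - n := by
      simpa [Nat.lt_succ_iff] using hm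
    have h1 : (n + m) - m = n := by omega
    have h2 : k - (n + m) = k - n - m := by omega
    have h3 : (t + ((n + m : ℕ) : ℝ)) = (t + n) + m := by push_cast; ring
    have h4 : ((n + m).choose m : ℝ) = ((n + m).factorial : ℝ)
        / ((m.factorial : ℝ) * (n.factorial : ℝ)) := by
      have h1' : n + m - m = n := by omega
      rw [Nat.cast_choose ℝ (Nat.le_add_left m n), h1']
    have h5 : (((k - n).choose m) : ℝ) = (((k - n).factorial : ℝ))
        / ((m.factorial : ℝ) * (((k - n - m).factorial : ℝ))) := by
      rw [Nat.cast_choose ℝ hm']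
    rw [h1, h2, h3, h4, h5]
    have e1 : ((n + m).factorial : ℝ) ≠ 0 := Nat.cast_ne_zero.mpr (Nat.factorial_ne_zero _)
    have e2 : (m.factorial : ℝ) ≠ 0 := Nat.cast_ne_zero.mpr (Nat.factorial_ne_zero _)
    have e3 : (n.factorial : ℝ) ≠ 0 := Nat.cast_ne_zero.mpr (Nat.factorial_ne_zero _)
    have e4 : ((k - n).factorial : ℝ) ≠ 0 := Nat.cast_ne_zero.mpr (Nat.factorial_ne_zero _)
    have e5 : ((k - n - m).factorial : ℝ) ≠ 0 := Nat.cast_ne_zero.mpr (Nat.factorial_ne_zero _)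
    field_simp
    ring
  rw [step, hkey]
  ring

/-- For a Gamma process (`G_t ∼ Gamma(t,1)`, independent increments with
`G_t - G_s ∼ Gamma(t-s,1)`), one has `E[L_k^{(t-1)}(G_t) ∣ G_s] = L_k^{(s-1)}(G_s)` for
`0 < s < t`.  Pointwise in the value `x ≥ 0` of `G_s`, this says that averaging
`L_k^{(t-1)}(x + y)` over the increment `y ∼ Gamma(t-s,1)` gives `L_k^{(s-1)}(x)`. -/
theorem stmt_10 (s t : ℝ) (hs : 0 < s) (hst : s < t) (k : ℕ) (x : ℝ) (hx : 0 ≤ x) :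
    ∫ y : ℝ, gammaDensity (t - s) y * laguerre k (t - 1) (x + y)
      = laguerre k (s - 1) x := by
  have ha : (0 : ℝ) < t - s := by linarith
  set c : ℕ → ℕ → ℝ := fun i m =>
    (-1 : ℝ) ^ i * (pochR (t + (i : ℝ)) (k - i) / (((k - i).factorial : ℝ)))
      * (x ^ (i - m) * ((i.choose m : ℝ))) / ((i.factorial : ℝ)) with hc
  have expand : ∀ y : ℝ, laguerre k (t - 1) (x + y)
      = ∑ i ∈ Finset.range (k + 1), ∑ m ∈ Finset.range (i + 1), c i m * y ^ m := by
    intro y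
    rw [laguerre]
    apply Finset.sum_congr rfl
    intro i _
    have hprod : (∏ j ∈ Finset.range (k - i), ((t - 1) + (i : ℝ) + 1 + (j : ℝ)))
        = pochR (t + (i : ℝ)) (k - i) := by
      apply Finset.prod_congr rfl
      intro j _
      ring
    have hpow : (x + y) ^ i
        = ∑ m ∈ Finset.range (i + 1), y ^ m * x ^ (i - m) * ((i.choose m : ℝ)) := by
      rw [add_comm x y, add_pow]
    rw [hprod, hpow, Finset.mul_sum, Finset.sum_div]
    apply Finset.sum_congr rfl
    intro m _
    simp only [hc]
    ring
  have step1 : ∫ y : ℝ, gammaDensity (t - s) y * laguerre k (t - 1) (x + y)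
      = ∑ i ∈ Finset.range (k + 1), ∑ m ∈ Finset.range (i + 1),
          c i m * pochR (t - s) m := by
    have heq : (fun y : ℝ => gammaDensity (t - s) y * laguerre k (t - 1) (x + y))
        = fun y : ℝ => ∑ i ∈ Finset.range (k + 1), ∑ m ∈ Finset.range (i + 1),
            c i m * (gammaDensity (t - s) y * y ^ m) := by
      funext y
      rw [expand y, Finset.mul_sum]
      apply Finset.sum_congr rfl
      intro i _
      rw [Finset.mul_sum]
      apply Finset.sum_congr rfl
      intro m _
      ring
    rw [heq, MeasureTheory.integral_finset_sum]
    · apply Finset.sum_congr rfl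
      intro i _
      rw [MeasureTheory.integral_finset_sum]
      · apply Finset.sum_congr rfl
        intro m _
        rw [MeasureTheory.integral_const_mul, integral_gd_pow _ ha m]
      · intro m _
        exact (integrable_gd_pow _ ha m).const_mul _
    · intro i _
      apply MeasureTheory.integrable_finset_sum
      intro m _
      exact (integrable_gd_pow _ ha m).const_mul _
  rw [step1, sum_reindex k (fun i m => c i m * pochR (t - s) m)]
  rw [laguerre]
  apply Finset.sum_congr rfl
  intro n _
  have hprod : (∏ j ∈ Finset.range (k - n), ((s - 1) + (n : ℝ) + 1 + (j : ℝ)))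
      = pochR (s + (n : ℝ)) (k - n) := by
    apply Finset.prod_congr rfl
    intro j _
    ring
  rw [hprod]
  simp only [hc]
  exact innerSumLem s t k n x
end

section
/- Define b_{kis} = (k!)^2 i! / ((s-k)!^2 (s-i)! (2k+i-2s)!) for nonnegative integers with the convention that terms with negative factorial arguments vanish. Then for i ≥ 1, 0 ≤ l ≤ i/2, and k ≥ i - l, one has b_{k+1,i,k+l+1} ≥ b_{k,i,k+l}; consequently Σ_{s} b_{k,i,s} ≤ Σ_{s} b_{k+1,i,s}, i.e., the sum Σ_{s≥0} b_{k,i,s} is nondecreasing in k for k ≥ i. -/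
/-- `1/n!` for an integer `n`, with the convention `1/n! = 0` for negative `n`. -/
noncomputable def invFact (n : ℤ) : ℝ :=
  if 0 ≤ n then ((n.toNat).factorial : ℝ)⁻¹ else 0

/-- `b_{kis} = (k!)² i! / ((s-k)!² (s-i)! (2k+i-2s)!)`, with terms containing the
factorial of a negative integer vanishing. -/
noncomputable def b (k i s : ℕ) : ℝ :=
  ((k.factorial : ℝ)) ^ 2 * (i.factorial : ℝ) *
    (invFact ((s : ℤ) - k)) ^ 2 * invFact ((s : ℤ) - i) * invFact (2 * k + i - 2 * s)

lemma invFact_natCast (n : ℕ) : invFact (n : ℤ) = ((n.factorial : ℝ))⁻¹ := by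
  simp [invFact]

lemma invFact_neg {n : ℤ} (h : n < 0) : invFact n = 0 := by
  simp [invFact, not_le.mpr h]

lemma invFact_nonneg (n : ℤ) : 0 ≤ invFact n := by
  unfold invFact; split <;> positivity

lemma b_nonneg (k i s : ℕ) : 0 ≤ b k i s := by
  unfold b
  have h1 := invFact_nonneg ((s:ℤ) - k)
  have h2 := invFact_nonneg ((s:ℤ) - i)
  have h3 := invFact_nonneg (2*(k:ℤ) + i - 2*s)
  positivity

lemma b_step (k i l : ℕ) (h1 : i ≤ k + l) (h2 : 2 * l ≤ i) :
    b k i (k + l) ≤ b (k + 1) i (k + l + 1) := by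
  unfold b
  have e1 : ((k + l : ℕ) : ℤ) - k = ((l : ℕ) : ℤ) := by push_cast; ring
  have e2 : ((k + l + 1 : ℕ) : ℤ) - ((k + 1 : ℕ) : ℤ) = ((l : ℕ) : ℤ) := by push_cast; ring
  have e3 : ((k + l : ℕ) : ℤ) - i = ((k + l - i : ℕ) : ℤ) := by omega
  have e4 : ((k + l + 1 : ℕ) : ℤ) - i = ((k + l - i + 1 : ℕ) : ℤ) := by omega
  have e5 : (2 * (k:ℤ) + i - 2 * ((k + l : ℕ) : ℤ)) = ((i - 2*l : ℕ) : ℤ) := by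
    push_cast; omega
  have e6 : (2 * ((k + 1 : ℕ) : ℤ) + i - 2 * ((k + l + 1 : ℕ) : ℤ)) = ((i - 2*l : ℕ) : ℤ) := by
    push_cast; omega
  rw [e1, e2, e3, e4, e5, e6]
  simp only [invFact_natCast]
  set m := k + l - i with hm
  have hml : m ≤ k := by omega
  have hb : (0:ℝ) < m.factorial := by exact_mod_cast Nat.factorial_pos m
  have hd : (0:ℝ) < (m+1).factorial := by exact_mod_cast Nat.factorial_pos (m+1)
  have key : ((k.factorial : ℝ))^2 * ((m.factorial : ℝ))⁻¹ ≤
      (((k+1).factorial : ℝ))^2 * (((m+1).factorial : ℝ))⁻¹ := by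
    rw [← div_eq_mul_inv, ← div_eq_mul_inv, div_le_div_iff₀ hb hd,
      Nat.factorial_succ (m), Nat.factorial_succ k]
    push_cast
    have h1 : (1:ℝ) ≤ (k.factorial : ℝ) := by exact_mod_cast Nat.one_le_iff_ne_zero.mpr (Nat.factorial_pos k).ne'
    have h2 : ((m:ℝ)) ≤ (k:ℝ) := by exact_mod_cast hml
    have h3 : ((m:ℝ) + 1) ≤ ((k:ℝ) + 1)^2 := by nlinarith [(Nat.cast_nonneg k : (0:ℝ) ≤ k)]
    nlinarith [mul_le_mul_of_nonneg_left h3 (by positivity : (0:ℝ) ≤ (k.factorial : ℝ)^2 * (m.factorial : ℝ))]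
  have hC : (0:ℝ) ≤ (i.factorial : ℝ) * (((l.factorial : ℝ))⁻¹)^2 * (((i-2*l).factorial : ℝ))⁻¹ := by positivity
  calc (k.factorial : ℝ)^2 * (i.factorial : ℝ) * (((l.factorial : ℝ))⁻¹)^2 * ((m.factorial : ℝ))⁻¹ * (((i-2*l).factorial : ℝ))⁻¹
      = ((k.factorial : ℝ)^2 * ((m.factorial : ℝ))⁻¹) * ((i.factorial : ℝ) * (((l.factorial : ℝ))⁻¹)^2 * (((i-2*l).factorial : ℝ))⁻¹) := by ring
    _ ≤ (((k+1).factorial : ℝ)^2 * (((m+1).factorial : ℝ))⁻¹) * ((i.factorial : ℝ) * (((l.factorial : ℝ))⁻¹)^2 * (((i-2*l).factorial : ℝ))⁻¹) := mul_le_mul_of_nonneg_right key hC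
    _ = ((k+1).factorial : ℝ)^2 * (i.factorial : ℝ) * (((l.factorial : ℝ))⁻¹)^2 * (((m+1).factorial : ℝ))⁻¹ * (((i-2*l).factorial : ℝ))⁻¹ := by ring

lemma b_key (k i : ℕ) (hik : i ≤ k) (s : ℕ) : b k i s ≤ b (k+1) i (s+1) := by
  rcases lt_or_ge s k with h | h
  · have hz : b k i s = 0 := by
      unfold b
      rw [invFact_neg (show ((s:ℤ) - (k:ℤ)) < 0 by omega)]
      ring
    rw [hz]; exact b_nonneg _ _ _
  · obtain ⟨l, rfl⟩ := Nat.exists_eq_add_of_le h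
    rcases le_or_gt (2*l) i with h2 | h2
    · exact b_step k i l (by omega) h2
    · have hz : b k i (k+l) = 0 := by
        unfold b
        rw [invFact_neg (show (2 * (k:ℤ) + i - 2 * ((k+l : ℕ):ℤ)) < 0 by push_cast; omega)]
        ring
      rw [hz]; exact b_nonneg _ _ _

lemma b_zero_of_large (k i s : ℕ) (h : k + i + 1 ≤ s) : b k i s = 0 := by
  unfold b
  rw [invFact_neg (show (2 * (k:ℤ) + i - 2 * (s:ℤ)) < 0 by push_cast; omega)]
  ring

lemma b_summable (k i : ℕ) : Summable (fun s => b k i s) := by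
  apply summable_of_ne_finset_zero (s := Finset.range (k + i + 1))
  intro s hs
  exact b_zero_of_large k i s (by simp [Finset.mem_range] at hs; omega)

/-- For `i ≥ 1`, `0 ≤ l ≤ i/2`, and `k ≥ i - l`, `b_{k+1,i,k+l+1} ≥ b_{k,i,k+l}`;
consequently `∑_s b_{k,i,s}` is nondecreasing in `k` for `k ≥ i`. -/
theorem stmt_14 :
    (∀ k i l : ℕ, 1 ≤ i → 2 * l ≤ i → i - l ≤ k →
      b k i (k + l) ≤ b (k + 1) i (k + l + 1)) ∧
    (∀ k i : ℕ, i ≤ k → (∑' s : ℕ, b k i s) ≤ ∑' s : ℕ, b (k + 1) i s) := by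
  constructor
  · intro k i l _ h2 hk
    exact b_step k i l (by omega) h2
  · intro k i hik
    have hsum1 := b_summable k i
    have hsum2 := b_summable (k+1) i
    have hsum2' : Summable (fun s => b (k+1) i (s+1)) := by
      exact (summable_nat_add_iff 1).mpr hsum2
    calc (∑' s : ℕ, b k i s) ≤ ∑' s : ℕ, b (k+1) i (s+1) :=
          Summable.tsum_le_tsum (b_key k i hik) hsum1 hsum2'
      _ ≤ ∑' s : ℕ, b (k+1) i s := by
          rw [Summable.tsum_eq_zero_add hsum2]
          exact le_add_of_nonneg_left (b_nonneg _ _ _)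
end

section
/- There is a constant c > 1 such that for all K ≥ 2, Σ_{i=K+1}^{2K} i! · Γ(K + ⌊i/2⌋ + 1)^2 / Γ(K + ⌊i/2⌋ - i + 1)^2 ≤ c^K K^{6K}. -/
/-- There is `c > 1` such that for all `K ≥ 2`,
`∑_{i=K+1}^{2K} i! ((K+⌊i/2⌋)!)² / ((K+⌊i/2⌋-i)!)² ≤ c^K K^{6K}`. -/
theorem stmt_16 :
    ∃ c : ℝ, 1 < c ∧ ∀ K : ℕ, 2 ≤ K →
      ∑ i ∈ Finset.Icc (K + 1) (2 * K),
          (i.factorial : ℝ) * (((K + i / 2).factorial : ℝ)) ^ 2 /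
            (((K + i / 2 - i).factorial : ℝ)) ^ 2
        ≤ c ^ K * (K : ℝ) ^ (6 * K) := by
  refine ⟨128, by norm_num, fun K hK => ?_⟩
  have hbound : ∀ i ∈ Finset.Icc (K + 1) (2 * K),
      (i.factorial : ℝ) * (((K + i / 2).factorial : ℝ)) ^ 2 /
        (((K + i / 2 - i).factorial : ℝ)) ^ 2 ≤ (((2 * K) ^ (2 * K) : ℕ) : ℝ) ^ 3 := by
    intro i hi
    obtain ⟨hi1, hi2⟩ := Finset.mem_Icc.mp hi
    have h1 : i.factorial ≤ (2 * K) ^ (2 * K) :=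
      le_trans (Nat.factorial_le hi2) (Nat.factorial_le_pow _)
    have h2 : (K + i / 2).factorial ≤ (2 * K) ^ (2 * K) := by
      refine le_trans (Nat.factorial_le (by omega)) (Nat.factorial_le_pow _)
    have hden : (1 : ℝ) ≤ (((K + i / 2 - i).factorial : ℝ)) ^ 2 := by
      have := (K + i / 2 - i).factorial_pos
      have : (1 : ℝ) ≤ ((K + i / 2 - i).factorial : ℝ) := by exact_mod_cast this
      nlinarith
    calc (i.factorial : ℝ) * (((K + i / 2).factorial : ℝ)) ^ 2 /
          (((K + i / 2 - i).factorial : ℝ)) ^ 2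
        ≤ (i.factorial : ℝ) * (((K + i / 2).factorial : ℝ)) ^ 2 := by
          apply div_le_self (by positivity) hden
      _ ≤ (((2 * K) ^ (2 * K) : ℕ) : ℝ) * ((((2 * K) ^ (2 * K) : ℕ) : ℝ)) ^ 2 := by
          have h1' : (i.factorial : ℝ) ≤ (((2 * K) ^ (2 * K) : ℕ) : ℝ) := by exact_mod_cast h1
          have h2' : ((K + i / 2).factorial : ℝ) ≤ (((2 * K) ^ (2 * K) : ℕ) : ℝ) := by
            exact_mod_cast h2
          have hf : (0 : ℝ) ≤ (i.factorial : ℝ) := by positivity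
          have hg : (0 : ℝ) ≤ ((K + i / 2).factorial : ℝ) := by positivity
          nlinarith [pow_le_pow_left₀ hg h2' 2, sq_nonneg ((K + i / 2).factorial : ℝ)]
      _ = (((2 * K) ^ (2 * K) : ℕ) : ℝ) ^ 3 := by ring
  have hsum := Finset.sum_le_card_nsmul _ _ _ hbound
  have hcard : (Finset.Icc (K + 1) (2 * K)).card = K := by
    rw [Nat.card_Icc]; omega
  rw [hcard] at hsum
  refine le_trans hsum ?_
  rw [nsmul_eq_mul]
  have hK2 : (K : ℝ) ≤ 2 ^ K := by exact_mod_cast (Nat.lt_two_pow_self (n := K)).le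
  have hKpos : (0 : ℝ) < K := by positivity
  push_cast
  have : ((2 : ℝ) * K) ^ (2 * K) = 2 ^ (2 * K) * (K : ℝ) ^ (2 * K) := by
    rw [mul_pow]
  rw [this]
  have key : (K : ℝ) * (2 ^ (2 * K) * (K : ℝ) ^ (2 * K)) ^ 3
      = (K : ℝ) * 2 ^ (6 * K) * (K : ℝ) ^ (6 * K) := by
    rw [mul_pow, ← pow_mul, ← pow_mul]
    ring_nf
  rw [key]
  have hfin : (K : ℝ) * 2 ^ (6 * K) ≤ 128 ^ K := by
    calc (K : ℝ) * 2 ^ (6 * K) ≤ 2 ^ K * 2 ^ (6 * K) := by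
          apply mul_le_mul_of_nonneg_right hK2 (by positivity)
      _ = 128 ^ K := by
          rw [← pow_add]
          have : K + 6 * K = 7 * K := by ring
          rw [this, pow_mul]
          norm_num
  exact mul_le_mul_of_nonneg_right hfin (by positivity)
end
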